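/- arXiv:1106.0191 — 3 statements merged into one kernel-verified Lean document; each statement's English description precedes it below -/
import Mathlib

section
/- The Stone–Čech compactification βℕ of the natural numbers (with the discrete topology) is not a sequential space: there exists a sequentially open subset of βℕ that is not open. -/
open Filter Topology

/-- A set is sequentially open if every sequence converging to a point of the set
is eventually in the set. -/
def SeqOpen {X : Type*} [TopologicalSpace X] (A : Set X) : Prop :=
  ∀ ⦃x⦄, x ∈ A → ∀ u : ℕ → X, Tendsto u atTop (𝓝 x) → ∀ᶠ n in atTop, u n ∈ A

/-- The sequential saturation of a topology: its open sets are the sequentially open sets. -/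
def seqSaturation {X : Type*} (τ : TopologicalSpace X) : TopologicalSpace X where
  IsOpen A := @SeqOpen X τ A
  isOpen_univ := fun _ _ u _ => Filter.Eventually.of_forall fun n => Set.mem_univ (u n)
  isOpen_inter := fun _ _ hs ht _ hx u hu => (hs hx.1 u hu).and (ht hx.2 u hu)
  isOpen_sUnion := fun _ hS _ hx u hu => by
    obtain ⟨s, hsS, hxs⟩ := hx
    exact (hS s hsS hxs u hu).mono fun n hn => ⟨s, hsS, hn⟩

/-!
An extremally disconnected Hausdorff space has no nontrivial convergent sequences: from a
sequence `u → x` with `u n ≠ x` infinitely often one extracts a subsequence whose terms have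
pairwise disjoint open neighbourhoods `C k`. The unions of the `C k` over even and over odd `k`
are then disjoint open sets both having `x` in their closure, which extremal disconnectedness
forbids. Hence every subset of `βℕ` is sequentially open, while `βℕ`, being compact and
infinite, is not discrete.
-/

section

open Function

variable {X : Type*} [TopologicalSpace X]

theorem exists_strictMono_pairwise_disjoint_nhds_of_tendsto [T2Space X] {u : ℕ → X} {x : X}
    (hu : Tendsto u atTop (𝓝 x)) (hne : ∃ᶠ n in atTop, u n ≠ x) :
    ∃ φ : ℕ → ℕ, StrictMono φ ∧ ∃ C : ℕ → Set X,
      (∀ k, IsOpen (C k)) ∧ Pairwise (Disjoint on C) ∧ ∀ k, u (φ k) ∈ C k := by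
  have hsep : ∀ y, ∃ U W : Set X, IsOpen U ∧ IsOpen W ∧ (y ≠ x → y ∈ U) ∧ x ∈ W ∧
      Disjoint U W := by
    intro y
    by_cases hy : y = x
    · exact ⟨∅, Set.univ, isOpen_empty, isOpen_univ, (absurd hy ·), trivial,
        Set.empty_disjoint _⟩
    · obtain ⟨U, W, hU, hW, hyU, hxW, hUW⟩ := t2_separation hy
      exact ⟨U, W, hU, hW, fun _ => hyU, hxW, hUW⟩
  choose U W hU hW hyU hxW hUW using hsep
  -- Each chosen term lies in the sets `W` separating `x` from all earlier terms; this makes the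
  -- sets `C k` below pairwise disjoint.
  obtain ⟨φ, hφne, hφ⟩ := exists_seq_of_forall_finset_exists (fun n => u n ≠ x)
    (fun m n => m < n ∧ u n ∈ W (u m)) fun s _ => by
      have hW_s : ∀ᶠ n in atTop, ∀ m ∈ s, u n ∈ W (u m) :=
        (s.eventually_all).2 fun m _ => hu ((hW _).mem_nhds (hxW _))
      have hgt : ∀ᶠ n in atTop, ∀ m ∈ s, m < n :=
        (s.eventually_all).2 fun m _ => eventually_gt_atTop m
      obtain ⟨n, hn, hnW, hngt⟩ := (hne.and_eventually (hW_s.and hgt)).exists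
      exact ⟨n, hn, fun m hm => ⟨hngt m hm, hnW m hm⟩⟩
  refine ⟨φ, strictMono_nat_of_lt_succ fun k => (hφ k (k + 1) k.lt_succ_self).1,
    fun k => U (u (φ k)) ∩ ⋂ j ∈ Finset.range k, W (u (φ j)), fun k => ?_, ?_, fun k => ?_⟩
  · exact (hU _).inter (isOpen_biInter_finset fun j _ => hW _)
  · intro j k hjk
    wlog hlt : j < k generalizing j k
    · exact (this hjk.symm (hjk.lt_or_gt.resolve_left hlt)).symm
    refine Set.disjoint_left.2 fun z hzj hzk => (hUW (u (φ j))).le_bot ⟨hzj.1, ?_⟩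
    exact Set.mem_iInter₂.1 hzk.2 j (Finset.mem_range.2 hlt)
  · exact ⟨hyU _ (hφne k), Set.mem_iInter₂.2 fun j hj => (hφ j k (Finset.mem_range.1 hj)).2⟩

theorem ExtremallyDisconnected.not_tendsto_of_pairwise_disjoint [ExtremallyDisconnected X]
    {C : ℕ → Set X} (hC : ∀ k, IsOpen (C k)) (hdisj : Pairwise (Disjoint on C))
    {v : ℕ → X} (hv : ∀ k, v k ∈ C k) (x : X) : ¬ Tendsto v atTop (𝓝 x) := by
  intro hvx
  have hEO : Disjoint (⋃ (k) (_ : Even k), C k) (⋃ (k) (_ : Odd k), C k) := by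
    simp only [Set.disjoint_iUnion_left, Set.disjoint_iUnion_right]
    intro j hj k hk
    exact hdisj fun hjk => Nat.not_even_iff_odd.2 hj (hjk ▸ hk)
  have hmem : ∀ p : ℕ → Prop, (∃ᶠ k in atTop, p k) → x ∈ closure (⋃ (k) (_ : p k), C k) :=
    fun p hp => mem_closure_of_frequently_of_tendsto
      (hp.mono fun k hk => Set.mem_biUnion hk (hv k)) hvx
  exact (ExtremallyDisconnected.disjoint_closure_of_disjoint_isOpen hEO
    (isOpen_biUnion fun k _ => hC k) (isOpen_biUnion fun k _ => hC k)).le_bot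
    ⟨hmem _ Nat.frequently_even, hmem _ Nat.frequently_odd⟩

variable [T2Space X] [ExtremallyDisconnected X]

theorem ExtremallyDisconnected.eventually_eq_of_tendsto {u : ℕ → X} {x : X}
    (hu : Tendsto u atTop (𝓝 x)) : ∀ᶠ n in atTop, u n = x := by
  by_contra hne
  obtain ⟨φ, hφ, C, hC, hdisj, hmem⟩ :=
    exists_strictMono_pairwise_disjoint_nhds_of_tendsto hu (not_eventually.1 hne)
  exact not_tendsto_of_pairwise_disjoint hC hdisj hmem x (hu.comp hφ.tendsto_atTop)

theorem ExtremallyDisconnected.seqOpen (A : Set X) : SeqOpen A := fun _ hx _ hu =>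
  (eventually_eq_of_tendsto hu).mono fun _ hn => hn ▸ hx

end

/-- The Stone–Čech compactification of `ℕ` is not a sequential space: there exists a
sequentially open subset of `βℕ` which is not open. -/
theorem stoneCech_nat_not_sequential :
    ∃ A : Set (StoneCech ℕ), SeqOpen A ∧ ¬ IsOpen A := by
  have : ExtremallyDisconnected (StoneCech ℕ) := StoneCech.projective.extremallyDisconnected
  by_contra! hopen
  have : DiscreteTopology (StoneCech ℕ) := discreteTopology_iff_forall_isOpen.2 fun A =>
    hopen A (ExtremallyDisconnected.seqOpen A)
  have : Infinite (StoneCech ℕ) := .of_injective _ injective_stoneCechUnit_of_t35Space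
  have : Finite (StoneCech ℕ) := finite_of_compact_of_discrete
  exact not_finite (StoneCech ℕ)
end

section
/- Let E be a field with a topology for which addition is continuous and multiplication by each fixed element is continuous. For each sequence {U_i}_{i∈ℤ} of open neighbourhoods of 0 in E with U_i = E for all sufficiently large i, let 𝒰 = { Σ_{i ≫ -∞} f_i t^i ∈ E((t)) : f_i ∈ U_i }. Then the collection of all such sets 𝒰 is a basis of neighbourhoods of 0 for a group topology on the additive group of the Laurent series field E((t)). -/
open Filter Topology Set

/-! Every condition defining a basic set, and every group filter basis axiom, concerns one
coefficient at a time, so a family `U` can be shrunk coordinatewise inside the topological group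
`E` (negation is multiplication by `-1`) to get `V i + V i ⊆ U i`, `-V i ⊆ U i`, ..., while
keeping `V i = E` wherever `U i = E`; the shrunk family is then still eventually trivial. -/

namespace HahnSeries

variable {Γ R : Type*} [AddGroup R] [TopologicalSpace R]

def openNhdsZeroFamilies (l : Filter Γ) : Set (Γ → Set R) :=
  {U | (∀ i, IsOpen (U i) ∧ (0 : R) ∈ U i) ∧ ∀ᶠ i in l, U i = univ}

variable {l : Filter Γ} {U V : Γ → Set R}

theorem univ_mem_openNhdsZeroFamilies : (fun _ => univ) ∈ openNhdsZeroFamilies (R := R) l :=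
  ⟨fun _ => ⟨isOpen_univ, mem_univ _⟩, univ_mem' fun _ => rfl⟩

theorem inter_mem_openNhdsZeroFamilies (hU : U ∈ openNhdsZeroFamilies l)
    (hV : V ∈ openNhdsZeroFamilies l) : (fun i => U i ∩ V i) ∈ openNhdsZeroFamilies l :=
  ⟨fun i => ⟨(hU.1 i).1.inter (hV.1 i).1, (hU.1 i).2, (hV.1 i).2⟩,
    (hU.2.and hV.2).mono fun i ⟨hUi, hVi⟩ => by simp only [hUi, hVi, inter_self]⟩

theorem preimage_mem_openNhdsZeroFamilies (hU : U ∈ openNhdsZeroFamilies l) {g : Γ → R → R}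
    (hg : ∀ i, Continuous (g i)) (hg0 : ∀ i, g i 0 = 0) :
    (fun i => g i ⁻¹' U i) ∈ openNhdsZeroFamilies l :=
  ⟨fun i => ⟨(hU.1 i).1.preimage (hg i), by simpa only [mem_preimage, hg0] using (hU.1 i).2⟩,
    hU.2.mono fun i hUi => by simp only [hUi, preimage_univ]⟩

theorem exists_add_mem_of_mem_openNhdsZeroFamilies [ContinuousAdd R]
    (hU : U ∈ openNhdsZeroFamilies l) :
    ∃ V ∈ openNhdsZeroFamilies l, ∀ i, ∀ x ∈ V i, ∀ y ∈ V i, x + y ∈ U i := by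
  classical
  choose W hWo hW0 hWU using fun i => exists_open_nhds_zero_half ((hU.1 i).1.mem_nhds (hU.1 i).2)
  refine ⟨fun i => if U i = univ then univ else W i, ⟨fun i => ?_, hU.2.mono fun i hUi => ?_⟩,
    fun i x hx y hy => ?_⟩
  · beta_reduce
    split_ifs
    exacts [⟨isOpen_univ, mem_univ _⟩, ⟨hWo i, hW0 i⟩]
  · simp only [hUi, if_true]
  · beta_reduce at hx hy
    split_ifs at hx hy with hUi
    exacts [hUi ▸ mem_univ _, hWU i x hx y hy]

variable [PartialOrder Γ]

def coeffBox (U : Γ → Set R) : Set (HahnSeries Γ R) :=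
  {f | ∀ i, f.coeff i ∈ U i}

variable [IsTopologicalAddGroup R]

abbrev boxAddGroupFilterBasis (l : Filter Γ) : AddGroupFilterBasis (HahnSeries Γ R) where
  sets := coeffBox '' openNhdsZeroFamilies l
  nonempty := ⟨_, mem_image_of_mem _ univ_mem_openNhdsZeroFamilies⟩
  inter_sets := by
    rintro _ _ ⟨U, hU, rfl⟩ ⟨V, hV, rfl⟩
    exact ⟨_, mem_image_of_mem _ (inter_mem_openNhdsZeroFamilies hU hV),
      fun f hf => ⟨fun i => (hf i).1, fun i => (hf i).2⟩⟩
  zero' := by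
    rintro _ ⟨U, hU, rfl⟩ i
    exact (hU.1 i).2
  add' := by
    rintro _ ⟨U, hU, rfl⟩
    obtain ⟨V, hV, hVU⟩ := exists_add_mem_of_mem_openNhdsZeroFamilies hU
    refine ⟨_, mem_image_of_mem _ hV, ?_⟩
    rintro _ ⟨f, hf, g, hg, rfl⟩ i
    exact hVU i _ (hf i) _ (hg i)
  neg' := by
    rintro _ ⟨U, hU, rfl⟩
    refine ⟨_, mem_image_of_mem _ (preimage_mem_openNhdsZeroFamilies hU
      (fun _ => continuous_neg) fun _ => neg_zero), fun f hf i => ?_⟩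
    simpa only [coeff_neg, mem_preimage] using hf i
  conj' := by
    rintro x₀ _ ⟨U, hU, rfl⟩
    refine ⟨_, mem_image_of_mem _ (preimage_mem_openNhdsZeroFamilies hU
      (g := fun i y => x₀.coeff i + y + -x₀.coeff i) (fun _ => by fun_prop)
      fun _ => by simp only [add_zero, add_neg_cancel]), fun f hf i => ?_⟩
    simpa only [coeff_add, coeff_neg, mem_preimage] using hf i

theorem boxAddGroupFilterBasis_nhds_zero_hasBasis (l : Filter Γ) :
    (@nhds _ (boxAddGroupFilterBasis (R := R) l).topology 0).HasBasis
      (· ∈ openNhdsZeroFamilies l) coeffBox :=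
  (boxAddGroupFilterBasis l).nhds_zero_hasBasis.to_hasBasis
    (fun _ ⟨U, hU, hUs⟩ => ⟨U, hU, hUs.le⟩) fun _ hU => ⟨_, mem_image_of_mem _ hU, subset_rfl⟩

end HahnSeries

/-- Let `E` be a field with a topology for which addition is continuous and
multiplication by each fixed element is continuous. The sets
`𝒰 = { Σ f_i t^i : f_i ∈ U_i }`, for `{U_i}` a family of open neighbourhoods of `0` in
`E` with `U_i = E` for all sufficiently large `i`, form a basis of neighbourhoods of `0`
for a group topology on the additive group of the Laurent series field `E((t))`. -/
theorem laurentSeries_higher_group_topology (E : Type*) [Field E] [TopologicalSpace E]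
    [ContinuousAdd E] (hmul : ∀ c : E, Continuous fun x : E => c * x) :
    ∃ τ : TopologicalSpace (LaurentSeries E),
      @IsTopologicalAddGroup (LaurentSeries E) τ _ ∧
      (@nhds (LaurentSeries E) τ 0).HasBasis
        (fun U : ℤ → Set E =>
          (∀ i, IsOpen (U i) ∧ (0 : E) ∈ U i) ∧ ∃ i₀ : ℤ, ∀ i ≥ i₀, U i = Set.univ)
        (fun U => {f : LaurentSeries E | ∀ i, f.coeff i ∈ U i}) := by
  have : IsTopologicalAddGroup E :=
    { continuous_neg := by simpa only [neg_one_mul] using hmul (-1) }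
  let B := HahnSeries.boxAddGroupFilterBasis (R := E) (atTop : Filter ℤ)
  refine ⟨B.topology, B.isTopologicalAddGroup, ?_⟩
  have hbasis := HahnSeries.boxAddGroupFilterBasis_nhds_zero_hasBasis (R := E) (atTop : Filter ℤ)
  simp only [HahnSeries.openNhdsZeroFamilies, mem_ofPred_eq, eventually_atTop] at hbasis
  exact hbasis
end

section
/- Let F = 𝔽_p((u))((t)) with its higher topology τ. The complement W in F of the set C = { t^a u^{-c} + t^{-a} u^c : a, c ≥ 1 } is sequentially open but not open for τ; hence τ is strictly coarser than its sequential saturation τ_s, and τ_s is not a linear topology. -/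
open Filter Topology

/-- The element `u` of `𝔽_p((u))`. -/
noncomputable def uElt (p : ℕ) [Fact p.Prime] : LaurentSeries (ZMod p) :=
  HahnSeries.single (1 : ℤ) (1 : ZMod p)

/-- The set `C = { t^a u^{-c} + t^{-a} u^c : a, c ≥ 1 } ⊆ 𝔽_p((u))((t))`. -/
noncomputable def Cset (p : ℕ) [Fact p.Prime] :
    Set (LaurentSeries (LaurentSeries (ZMod p))) :=
  {f | ∃ a c : ℕ, 1 ≤ a ∧ 1 ≤ c ∧
    f = HahnSeries.single (a : ℤ) (uElt p ^ (-(c : ℤ))) +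
        HahnSeries.single (-(a : ℤ)) (uElt p ^ (c : ℤ))}

/-!
A basic `τ`-neighbourhood of `0` leaves all coefficients of large index free, but may prescribe
an arbitrary `u`-adic precision at each negative index, independently of the others.

`C` is sequentially closed: given `t^{aₖ} u^{-cₖ} + t^{-aₖ} u^{cₖ} → x`, pass to a subsequence
along which either `aₖ → ∞`, and the neighbourhood of `x` excluding at each index `-a` the
finitely many values `u^{cₖ}` with `aₖ = a` contains no late term; or `aₖ = a` and `cₖ → ∞`, and the
coefficient `u^{-cₖ}` at index `a` diverges in `𝔽_p((u))`; or the terms are constant, hence `= x`.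

`C` accumulates at `0 ∉ C`: a basic neighbourhood leaves the coefficient at some large `a` free,
and `u^c` meets its constraint at `-a` once `c ≫ 0`. Taking these two limits in turn puts a point of
`C` into every sequentially open subgroup `H`: first `t^{-a} u^{cₐ} ∈ H` for each `a`, then
`t^a u^{-cₐ} ∈ H` for some `a`.
-/

theorem HahnSeries.eventually_coeff_eq_zero_atBot {V : Type*} [Zero V] (x : HahnSeries ℤ V) :
    ∀ᶠ n in atBot, x.coeff n = 0 :=
  (eventually_lt_atBot x.order).mono fun _ => coeff_eq_zero_of_lt_order

theorem Nat.tendsto_atTop_or_exists_subseq_eq (a : ℕ → ℕ) :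
    Tendsto a atTop atTop ∨ ∃ A, ∃ φ : ℕ → ℕ, StrictMono φ ∧ ∀ k, a (φ k) = A := by
  refine or_iff_not_imp_left.2 fun ha => ?_
  obtain ⟨M, hM⟩ : ∃ M, ∃ᶠ k in atTop, a k < M := by
    simpa only [tendsto_atTop, not_forall, not_eventually, not_le] using ha
  obtain ⟨A, -, hA⟩ : ∃ A ∈ Finset.range M, ∃ᶠ k in atTop, a k = A := by
    rw [← frequently_exists_finset]
    exact hM.mono fun k hk => ⟨a k, Finset.mem_range.2 hk, rfl⟩
  exact ⟨A, extraction_of_frequently_atTop hA⟩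

theorem IsSeqClosed.seqOpen_compl {X : Type*} [TopologicalSpace X] {s : Set X}
    (hs : IsSeqClosed s) : SeqOpen sᶜ := by
  intro x hx u hu
  by_contra h
  obtain ⟨φ, hφ, hφs⟩ := extraction_of_frequently_atTop
    ((not_eventually.1 h).mono fun _ => not_not.1)
  exact hx (hs hφs (hu.comp hφ.tendsto_atTop))

theorem seqSaturation_le {X : Type*} (τ : TopologicalSpace X) : seqSaturation τ ≤ τ :=
  fun _ hs _ hx _ hu => hu.eventually_mem (hs.mem_nhds hx)

theorem seqSaturation_lt {X : Type*} {τ : TopologicalSpace X} {s : Set X}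
    (hseq : @SeqOpen X τ s) (hs : ¬ @IsOpen X τ s) : seqSaturation τ < τ :=
  lt_of_le_of_ne (seqSaturation_le τ) fun h => hs (h ▸ hseq)

namespace LaurentSeries

theorem eventually_coeff_neg_eq_zero {K ι : Type*} [Field K] {l : Filter ι}
    {g : ι → LaurentSeries K} (hg : Tendsto g l (𝓝 0)) :
    ∀ᶠ k in l, ∀ n < 0, (g k).coeff n = 0 := by
  filter_upwards [hg.eventually ((Valued.isOpen_integer _).mem_nhds (zero_mem _))] with k hk
  exact (valuation_le_iff_coeff_lt_eq_zero K (D := 0)).1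
    (by simpa using (Valuation.mem_integer_iff _ _).1 hk)

section HigherTopology

variable {K : Type*} [TopologicalSpace K] [Zero K]

def IsHigherNhdsFamily (U : ℤ → Set K) : Prop :=
  (∀ i, IsOpen (U i) ∧ (0 : K) ∈ U i) ∧ ∃ i₀ : ℤ, ∀ i ≥ i₀, U i = Set.univ

def higherBox (U : ℤ → Set K) : Set (LaurentSeries K) :=
  {f | ∀ i, f.coeff i ∈ U i}

theorem isHigherNhdsFamily_update_univ (i : ℤ) {s : Set K} (hs : IsOpen s) (h0 : (0 : K) ∈ s) :
    IsHigherNhdsFamily (Function.update (fun _ => Set.univ) i s) := by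
  refine ⟨fun j => ?_, i + 1, fun j hj => Function.update_of_ne (by omega) _ _⟩
  rcases eq_or_ne j i with rfl | hj
  · simpa using ⟨hs, h0⟩
  · simp [Function.update_of_ne hj]

variable {τ : TopologicalSpace (LaurentSeries K)}
  (hτ : (@nhds _ τ 0).HasBasis IsHigherNhdsFamily higherBox)
include hτ

theorem tendsto_coeff_of_tendsto_zero {ι : Type*} {l : Filter ι} {f : ι → LaurentSeries K}
    (hf : Tendsto f l (@nhds _ τ 0)) (i : ℤ) : Tendsto (fun k => (f k).coeff i) l (𝓝 0) := by
  refine (nhds_basis_opens 0).tendsto_right_iff.2 fun s ⟨h0, hs⟩ => ?_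
  filter_upwards [hτ.tendsto_right_iff.1 hf _ (isHigherNhdsFamily_update_univ i hs h0)]
    with k hk using by simpa using hk i

theorem tendsto_single_of_tendsto_zero {ι : Type*} {l : Filter ι} (i : ℤ) {g : ι → K}
    (hg : Tendsto g l (𝓝 0)) : Tendsto (fun k => HahnSeries.single i (g k)) l (@nhds _ τ 0) := by
  refine hτ.tendsto_right_iff.2 fun U ⟨hU, _⟩ => ?_
  filter_upwards [hg.eventually ((hU i).1.mem_nhds (hU i).2)] with k hk j
  rcases eq_or_ne j i with rfl | hj
  · rwa [HahnSeries.coeff_single_same]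
  · simpa [HahnSeries.coeff_single_of_ne hj] using (hU j).2

theorem tendsto_single_of_tendsto_atTop {ι : Type*} {l : Filter ι} {n : ι → ℤ}
    (hn : Tendsto n l atTop) (g : ι → K) :
    Tendsto (fun k => HahnSeries.single (n k) (g k)) l (@nhds _ τ 0) := by
  refine hτ.tendsto_right_iff.2 fun U ⟨hU, i₀, hi₀⟩ => ?_
  filter_upwards [hn.eventually_ge_atTop i₀] with k hk j
  rcases eq_or_ne j (n k) with rfl | hj
  · simp [hi₀ _ hk]
  · simpa [HahnSeries.coeff_single_of_ne hj] using (hU j).2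

theorem eq_zero_of_tendsto_const [T1Space K] {ι : Type*} {l : Filter ι} [l.NeBot]
    {d : LaurentSeries K} (hd : Tendsto (fun _ : ι => d) l (@nhds _ τ 0)) : d = 0 :=
  HahnSeries.ext <| funext fun i => tendsto_const_nhds_iff.1 (tendsto_coeff_of_tendsto_zero hτ hd i)

theorem eventually_coeff_eq_zero_of_tendsto_atBot [T1Space K] {f : ℕ → LaurentSeries K}
    (hf : Tendsto f atTop (@nhds _ τ 0)) {n : ℕ → ℤ} (hn : Tendsto n atTop atBot) :
    ∀ᶠ k in atTop, (f k).coeff (n k) = 0 := by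
  classical
  have hN (i : ℤ) : ∃ N, ∀ k ≥ N, n k < i := eventually_atTop.1 (hn.eventually_lt_atBot i)
  choose N hN using hN
  -- Only `k < N i` can have `n k = i`, so at index `i < 0` it suffices to avoid finitely many
  -- nonzero values.
  let S (i : ℤ) : Finset K := ((Finset.range (N i)).image fun k => (f k).coeff i).erase 0
  let U (i : ℤ) : Set K := if i < 0 then (S i : Set K)ᶜ else Set.univ
  have hU : IsHigherNhdsFamily U := by
    refine ⟨fun i => ?_, 0, fun i hi => if_neg (not_lt.2 hi)⟩
    by_cases hi : i < 0
    · simpa [U, hi, S] using (S i).finite_toSet.isClosed.isOpen_compl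
    · simp [U, hi]
  filter_upwards [hτ.tendsto_right_iff.1 hf U hU, hn.eventually_lt_atBot 0] with k hk hk0
  by_contra hne
  have hkN : k < N (n k) := not_le.1 fun h => (hN _ k h).false
  have hkU := hk (n k)
  simp only [U, if_pos hk0, Set.mem_compl_iff, Finset.mem_coe, S, Finset.mem_erase,
    Finset.mem_image, Finset.mem_range] at hkU
  exact hkU ⟨hne, k, hkN, rfl⟩

end HigherTopology

theorem single_add_single_mem_higherBox {K : Type*} [TopologicalSpace K] [AddMonoid K]
    {U : ℤ → Set K} (hU : IsHigherNhdsFamily U) {i j : ℤ} (hij : i ≠ j) {x y : K}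
    (hx : x ∈ U i) (hy : y ∈ U j) :
    HahnSeries.single i x + HahnSeries.single j y ∈ higherBox U := by
  intro k
  rw [HahnSeries.coeff_add]
  rcases eq_or_ne k i with rfl | hki
  · simpa [HahnSeries.coeff_single_of_ne hij] using hx
  rcases eq_or_ne k j with rfl | hkj
  · simpa [HahnSeries.coeff_single_of_ne hki] using hy
  · simpa [HahnSeries.coeff_single_of_ne hki, HahnSeries.coeff_single_of_ne hkj] using (hU.1 k).2

end LaurentSeries

open LaurentSeries

section Cset

variable (p : ℕ) [Fact p.Prime]

theorem uElt_zpow (z : ℤ) : uElt p ^ z = HahnSeries.single z 1 :=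
  (RatFunc.single_zpow z).symm

theorem uElt_zpow_ne_zero (z : ℤ) : uElt p ^ z ≠ 0 :=
  zpow_ne_zero z (HahnSeries.single_ne_zero one_ne_zero)

theorem tendsto_uElt_zpow_natCast :
    Tendsto (fun n : ℕ => uElt p ^ (n : ℤ)) atTop (𝓝 0) := by
  simp only [zpow_natCast]
  exact Valued.tendsto_zero_pow_of_le_exp_neg_one (valuation_single_zpow (ZMod p) 1).le

noncomputable def cElt (a c : ℕ) : LaurentSeries (LaurentSeries (ZMod p)) :=
  HahnSeries.single (a : ℤ) (uElt p ^ (-(c : ℤ))) + HahnSeries.single (-(a : ℤ)) (uElt p ^ (c : ℤ))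

theorem mem_Cset_iff {f : LaurentSeries (LaurentSeries (ZMod p))} :
    f ∈ Cset p ↔ ∃ a c : ℕ, 1 ≤ a ∧ 1 ≤ c ∧ f = cElt p a c :=
  Iff.rfl

variable {p}

theorem cElt_coeff_natCast {a : ℕ} (ha : 1 ≤ a) (c : ℕ) :
    (cElt p a c).coeff (a : ℤ) = uElt p ^ (-(c : ℤ)) := by
  simp [cElt, HahnSeries.coeff_single_of_ne (show (a : ℤ) ≠ -a by omega)]

theorem cElt_coeff_neg_natCast {a : ℕ} (ha : 1 ≤ a) (c : ℕ) :
    (cElt p a c).coeff (-(a : ℤ)) = uElt p ^ (c : ℤ) := by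
  simp [cElt, HahnSeries.coeff_single_of_ne (show -(a : ℤ) ≠ a by omega)]

theorem zero_notMem_Cset : (0 : LaurentSeries (LaurentSeries (ZMod p))) ∉ Cset p := fun h0 => by
  obtain ⟨a, c, ha, -, h⟩ := (mem_Cset_iff p).1 h0
  apply uElt_zpow_ne_zero p (-(c : ℤ))
  rw [← cElt_coeff_natCast ha c, ← h, HahnSeries.coeff_zero]

variable {τ : TopologicalSpace (LaurentSeries (LaurentSeries (ZMod p)))}
  (hτ : (@nhds _ τ 0).HasBasis IsHigherNhdsFamily higherBox)
include hτ

theorem not_tendsto_cElt_sub_of_fst_tendsto_atTop {a : ℕ → ℕ} (ha : Tendsto a atTop atTop)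
    (c : ℕ → ℕ) (x : LaurentSeries (LaurentSeries (ZMod p))) :
    ¬ Tendsto (fun k => cElt p (a k) (c k) - x) atTop (@nhds _ τ 0) := by
  intro hf
  have hna : Tendsto (fun k => -(a k : ℤ)) atTop atBot :=
    tendsto_neg_atTop_atBot.comp (tendsto_natCast_atTop_atTop.comp ha)
  obtain ⟨k, hk0, hk1, hx⟩ := ((eventually_coeff_eq_zero_of_tendsto_atBot hτ hf hna).and
    ((ha.eventually_ge_atTop 1).and (hna.eventually x.eventually_coeff_eq_zero_atBot))).exists
  rw [HahnSeries.coeff_sub, cElt_coeff_neg_natCast hk1, hx, sub_zero] at hk0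
  exact uElt_zpow_ne_zero p _ hk0

theorem not_tendsto_cElt_sub_of_snd_tendsto_atTop {a : ℕ} (ha : 1 ≤ a) {c : ℕ → ℕ}
    (hc : Tendsto c atTop atTop) (x : LaurentSeries (LaurentSeries (ZMod p))) :
    ¬ Tendsto (fun k => cElt p a (c k) - x) atTop (@nhds _ τ 0) := by
  intro hf
  have hnc : Tendsto (fun k => -(c k : ℤ)) atTop atBot :=
    tendsto_neg_atTop_atBot.comp (tendsto_natCast_atTop_atTop.comp hc)
  obtain ⟨k, hk0, hk1, hx⟩ := ((eventually_coeff_neg_eq_zero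
    (tendsto_coeff_of_tendsto_zero hτ hf a)).and ((hc.eventually_ge_atTop 1).and
      (hnc.eventually (x.coeff a).eventually_coeff_eq_zero_atBot))).exists
  have h1 := hk0 (-(c k : ℤ)) (by omega)
  rw [HahnSeries.coeff_sub, cElt_coeff_natCast ha, HahnSeries.coeff_sub, hx, sub_zero,
    uElt_zpow, HahnSeries.coeff_single_same] at h1
  exact one_ne_zero h1

theorem isSeqClosed_Cset (hgrp : @IsTopologicalAddGroup _ τ _) : @IsSeqClosed _ τ (Cset p) := by
  intro y x hy hx
  simp only [mem_Cset_iff] at hy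
  choose a c ha hc hyac using hy
  have hf : Tendsto (fun k => cElt p (a k) (c k) - x) atTop (@nhds _ τ 0) := by
    let := τ
    simpa only [sub_self, hyac] using hx.sub_const x
  rcases Nat.tendsto_atTop_or_exists_subseq_eq a with ha' | ⟨A, φ, hφ, hA⟩
  · exact absurd hf (not_tendsto_cElt_sub_of_fst_tendsto_atTop hτ ha' c x)
  have hfφ := hf.comp hφ.tendsto_atTop
  simp only [Function.comp_def, hA] at hfφ
  rcases Nat.tendsto_atTop_or_exists_subseq_eq (c ∘ φ) with hc' | ⟨C, ψ, hψ, hC⟩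
  · exact absurd hfφ (not_tendsto_cElt_sub_of_snd_tendsto_atTop hτ (hA 0 ▸ ha _) hc' x)
  have hfψ := hfφ.comp hψ.tendsto_atTop
  simp only [Function.comp_def, show ∀ k, c (φ (ψ k)) = C from hC] at hfψ
  exact ⟨A, C, hA 0 ▸ ha _, hC 0 ▸ hc _, (sub_eq_zero.1 (eq_zero_of_tendsto_const hτ hfψ)).symm⟩

theorem not_isOpen_compl_Cset : ¬ @IsOpen _ τ (Cset p)ᶜ := by
  intro hC
  obtain ⟨U, hU, hUC⟩ := hτ.mem_iff.1 (@IsOpen.mem_nhds _ τ _ _ hC zero_notMem_Cset)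
  obtain ⟨i₀, hi₀⟩ := hU.2
  set a := i₀.toNat + 1
  obtain ⟨c, hc1, hcU⟩ := ((eventually_ge_atTop 1).and
    ((tendsto_uElt_zpow_natCast p).eventually_mem ((hU.1 (-a)).1.mem_nhds (hU.1 (-a)).2))).exists
  have hau : uElt p ^ (-(c : ℤ)) ∈ U a := hi₀ a (by omega) ▸ Set.mem_univ _
  exact hUC (single_add_single_mem_higherBox hU (by omega) hau hcU) ⟨a, c, by omega, hc1, rfl⟩

theorem exists_mem_Cset_of_seqOpen (H : AddSubgroup (LaurentSeries (LaurentSeries (ZMod p))))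
    (hH : @SeqOpen _ τ H) : ∃ f ∈ Cset p, f ∈ H := by
  have hneg (a : ℕ) : ∃ c : ℕ, 1 ≤ c ∧ HahnSeries.single (-(a : ℤ)) (uElt p ^ (c : ℤ)) ∈ H :=
    ((eventually_ge_atTop 1).and (hH H.zero_mem _
      (tendsto_single_of_tendsto_zero hτ _ (tendsto_uElt_zpow_natCast p)))).exists
  choose c hc1 hcH using hneg
  obtain ⟨a, ha1, haH⟩ := ((eventually_ge_atTop 1).and (hH H.zero_mem _
    (tendsto_single_of_tendsto_atTop hτ tendsto_natCast_atTop_atTop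
      fun a => uElt p ^ (-(c a : ℤ))))).exists
  exact ⟨cElt p a (c a), ⟨a, c a, ha1, hc1 a, rfl⟩, H.add_mem haH (hcH a)⟩

end Cset

/-- Let `F = 𝔽_p((u))((t))` with a higher topology `τ` (a group topology whose
neighbourhoods of zero have as a basis the sets `{ Σ fᵢ tⁱ : fᵢ ∈ Uᵢ }`, where the `Uᵢ`
are open neighbourhoods of zero in the valuation topology of `𝔽_p((u))` with
`Uᵢ = 𝔽_p((u))` for large `i`).  The complement `W` of
`C = { t^a u^{-c} + t^{-a} u^c : a, c ≥ 1 }` is sequentially open but not open for `τ`;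
hence `τ` is strictly coarser than its sequential saturation `τ_s`, and `τ_s` is not a
linear topology (not every `τ_s`-neighbourhood of `0` contains a `τ_s`-open subgroup). -/
theorem higher_topology_not_sequentially_saturated_and_not_linear (p : ℕ)
    [Fact p.Prime] (τ : TopologicalSpace (LaurentSeries (LaurentSeries (ZMod p))))
    (hgrp : @IsTopologicalAddGroup (LaurentSeries (LaurentSeries (ZMod p))) τ _)
    (hbasis : (@nhds (LaurentSeries (LaurentSeries (ZMod p))) τ 0).HasBasis
      (fun U : ℤ → Set (LaurentSeries (ZMod p)) =>
        (∀ i, IsOpen (U i) ∧ (0 : LaurentSeries (ZMod p)) ∈ U i) ∧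
          ∃ i₀ : ℤ, ∀ i ≥ i₀, U i = Set.univ)
      (fun U => {f : LaurentSeries (LaurentSeries (ZMod p)) | ∀ i, f.coeff i ∈ U i})) :
    @SeqOpen _ τ (Cset p)ᶜ ∧ ¬ @IsOpen _ τ (Cset p)ᶜ ∧ seqSaturation τ < τ ∧
    ¬ (∀ S : Set (LaurentSeries (LaurentSeries (ZMod p))),
        @IsOpen _ (seqSaturation τ) S → (0 : LaurentSeries (LaurentSeries (ZMod p))) ∈ S →
        ∃ H : AddSubgroup (LaurentSeries (LaurentSeries (ZMod p))),
          (H : Set (LaurentSeries (LaurentSeries (ZMod p)))) ⊆ S ∧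
          @IsOpen _ (seqSaturation τ) (H : Set (LaurentSeries (LaurentSeries (ZMod p))))) := by
  have hseq : @SeqOpen _ τ (Cset p)ᶜ := (isSeqClosed_Cset hbasis hgrp).seqOpen_compl
  have hopen : ¬ @IsOpen _ τ (Cset p)ᶜ := not_isOpen_compl_Cset hbasis
  refine ⟨hseq, hopen, seqSaturation_lt hseq hopen, fun hlin => ?_⟩
  obtain ⟨H, hHC, hH⟩ := hlin _ hseq zero_notMem_Cset
  obtain ⟨f, hfC, hfH⟩ := exists_mem_Cset_of_seqOpen hbasis H hH
  exact hHC hfH hfC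
end
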